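/- arXiv:2101.09548 — 11 statements merged into one kernel-verified Lean document; each statement's English description precedes it below -/
import Mathlib

section
/- Let q ≥ 2 be an integer and let r, s, n be integers with 2 ≤ r ≤ n/2, 1 ≤ s < n, and s·r ≤ n. Then ∏_{i=0}^{r-1} (q^{n-is} - 1)/(q^{r-i} - 1) > q^{r(n-r) - (s-1)·r(r-1)/2}. -/
/-!
Since `(x ^ a - 1) / (x ^ b - 1) > x ^ (a - b)` for `x > 1` and `0 < b < a`, the `i`-th factor
exceeds `q ^ (n - i * s - (r - i))`, and these exponents sum to at least
`r * (n - r) - (s - 1) * (r * (r - 1) / 2)`.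
-/

open Finset

theorem pow_sub_lt_pow_sub_one_div_pow_sub_one {K : Type*} [Field K] [LinearOrder K]
    [IsStrictOrderedRing K] {x : K} (hx : 1 < x) {a b : ℕ} (hb : 0 < b) (hba : b < a) :
    x ^ (a - b) < (x ^ a - 1) / (x ^ b - 1) := by
  have hden : 0 < x ^ b - 1 := sub_pos.mpr (one_lt_pow₀ hx hb.ne')
  have hsplit : x ^ (a - b) * (x ^ b - 1) = x ^ a - x ^ (a - b) := by
    rw [mul_sub, mul_one, ← pow_add, Nat.sub_add_cancel hba.le]
  rw [lt_div_iff₀ hden, hsplit, sub_lt_sub_iff_left]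
  exact one_lt_pow₀ hx (Nat.sub_pos_of_lt hba).ne'

theorem tsub_lt_tsub_mul_of_lt {r s n i : ℕ} (hrn : 2 * r ≤ n) (hsr : s * r ≤ n) (hi : i < r) :
    r - i < n - i * s := by
  rcases Nat.lt_or_ge s 2 with hs | hs
  · have : i * s ≤ i * 1 := Nat.mul_le_mul_left i (by omega)
    omega
  · have hsplit : i * s + (r - i) * s = r * s := by
      rw [← Nat.add_mul, Nat.add_sub_cancel' hi.le]
    have : (r - i) * 2 ≤ (r - i) * s := Nat.mul_le_mul_left _ hs
    rw [mul_comm s r] at hsr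
    omega

theorem mul_tsub_tsub_le_sum_range (r s n : ℕ) :
    r * (n - r) - (s - 1) * (r * (r - 1) / 2) ≤ ∑ i ∈ range r, (n - i * s - (r - i)) := by
  have hterm : ∀ i ∈ range r, n - r ≤ (n - i * s - (r - i)) + (s - 1) * i := by
    intro i hi
    have hir : i < r := mem_range.mp hi
    rcases s with _ | t
    · omega
    · rw [Nat.add_sub_cancel, mul_add_one, mul_comm i t]
      generalize t * i = m
      omega
  have hsum := sum_le_sum hterm
  rw [sum_const, card_range, smul_eq_mul, sum_add_distrib, ← mul_sum] at hsum
  rw [← sum_range_id, tsub_le_iff_right]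
  exact hsum

theorem stmt2_general (q r s n : ℕ) (hq : 2 ≤ q) (hr : 2 ≤ r) (hrn : 2 * r ≤ n)
    (hsr : s * r ≤ n) :
    (q : ℚ) ^ (r * (n - r) - (s - 1) * (r * (r - 1) / 2)) <
      ∏ i ∈ Finset.range r, (((q : ℚ) ^ (n - i * s) - 1) / ((q : ℚ) ^ (r - i) - 1)) := by
  have hq1 : (1 : ℚ) < q := by exact_mod_cast hq
  calc (q : ℚ) ^ (r * (n - r) - (s - 1) * (r * (r - 1) / 2))
      ≤ (q : ℚ) ^ (∑ i ∈ range r, (n - i * s - (r - i))) :=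
        pow_le_pow_right₀ hq1.le (mul_tsub_tsub_le_sum_range r s n)
    _ = ∏ i ∈ range r, (q : ℚ) ^ (n - i * s - (r - i)) := (prod_pow_eq_pow_sum _ _ _).symm
    _ < ∏ i ∈ range r, (((q : ℚ) ^ (n - i * s) - 1) / ((q : ℚ) ^ (r - i) - 1)) := by
      refine prod_lt_prod_of_nonempty (fun i _ => pow_pos (by positivity) _)
        (fun i hi => ?_) (nonempty_range_iff.mpr (by omega))
      have hir : i < r := mem_range.mp hi
      exact pow_sub_lt_pow_sub_one_div_pow_sub_one hq1 (Nat.sub_pos_of_lt hir)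
        (tsub_lt_tsub_mul_of_lt hrn hsr hir)

/-- If `q ≥ 2`, `2 ≤ r ≤ n/2`, `1 ≤ s < n`, `s·r ≤ n`, then
`∏_{i=0}^{r-1} (q^{n-is} - 1)/(q^{r-i} - 1) > q^{r(n-r) - (s-1)·r(r-1)/2}`. -/
theorem stmt2 (q r s n : ℕ) (hq : 2 ≤ q) (hr : 2 ≤ r) (hrn : 2 * r ≤ n) (hs : 1 ≤ s)
    (hsn : s < n) (hsr : s * r ≤ n) :
    (q : ℚ) ^ (r * (n - r) - (s - 1) * (r * (r - 1) / 2)) <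
      ∏ i ∈ Finset.range r, (((q : ℚ) ^ (n - i * s) - 1) / ((q : ℚ) ^ (r - i) - 1)) :=
  stmt2_general q r s n hq hr hrn hsr
end

section
/- Let q ≥ 2 and n, k, s be integers with 2 ≤ k ≤ n/2, 1 ≤ s < n, and 2s ≤ n. Then (q-1)(q^n - q^s) - (q^k - 1)(q^k - q) > 0. -/
/-- If `q ≥ 2`, `2 ≤ k ≤ n/2`, `1 ≤ s < n`, `2s ≤ n`, then
`(q-1)(q^n - q^s) - (q^k - 1)(q^k - q) > 0`. -/
theorem stmt3 (q : ℤ) (n k s : ℕ) (hq : 2 ≤ q) (hk : 2 ≤ k) (hkn : 2 * k ≤ n)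
    (hs : 1 ≤ s) (hsn : s < n) (hs2 : 2 * s ≤ n) :
    0 < (q - 1) * (q ^ n - q ^ s) - (q ^ k - 1) * (q ^ k - q) := by
  have hq0 : (0:ℤ) < q := by linarith
  have hq1 : (1:ℤ) ≤ q := by linarith
  have hsnk : s ≤ n - k := by omega
  have hknk : k ≤ n - k := by omega
  have hn : n = k + (n - k) := by omega
  have hc : (q:ℤ) ^ n = q ^ k * q ^ (n - k) := by
    nth_rewrite 1 [hn]; rw [pow_add]
  have hb : (q:ℤ) ^ s ≤ q ^ (n - k) := pow_le_pow_right₀ hq1 hsnk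
  have ha : (q:ℤ) ^ k ≤ q ^ (n - k) := pow_le_pow_right₀ hq1 hknk
  have haq : (q:ℤ) ≤ q ^ k := le_self_pow₀ hq1 (by omega)
  have hap : (0:ℤ) < q ^ k := pow_pos hq0 k
  rw [hc]
  nlinarith [mul_pos hap hap, mul_le_mul_of_nonneg_left hb (by linarith : (0:ℤ) ≤ q - 1),
    mul_le_mul_of_nonneg_right ha (by linarith : (0:ℤ) ≤ q ^ k - 1),
    mul_le_mul_of_nonneg_left ha (by nlinarith : (0:ℤ) ≤ (q - 1) * (q ^ k - 1))]
end

section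
/- Let s, t, n be positive integers with s dividing t, t dividing n, and s ≠ t, and let q ≥ 2. Write q̂ = q^s, n̂ = n/s, a = t/s. Then ∏_{i=0}^{n̂-1} (q̂^{n̂} - q̂^i) > n · ∏_{i=0}^{n̂/a - 1} (q̂^{n̂} - q̂^{ai}), provided n ≥ 4. (This says |GL_{n/s}(q^s)| exceeds |N_{GL_n(q)}(GL_{n/t}(q^t))| = t·|GL_{n/t}(q^t)|.) -/
/-!
Write `n = s·N` with `N = n/s` and `Q = q^s`. The factors of the left-hand product are those
factors `Q^N - Q^j` of the right-hand product with `a ∣ j`, where `a = t/s ≥ 2`. Hence the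
right-hand product also contains the factor `Q^N - Q^(N-1)`, which is at least `Q^N / 2 ≥ 2^(n-1)`,
and `2^(n-1) > n` as soon as `n ≥ 3`.
-/

open Finset

theorem Nat.two_mul_lt_two_pow {n : ℕ} (hn : 3 ≤ n) : 2 * n < 2 ^ n := by
  induction n, hn using Nat.le_induction with
  | base => norm_num
  | succ n hn ih =>
    have : 2 ≤ 2 ^ n := Nat.le_self_pow (by omega) 2
    rw [pow_succ]
    omega

theorem Nat.pow_le_two_mul_pow_sub_pow {Q N j : ℕ} (hQ : 2 ≤ Q) (hj : j < N) :
    Q ^ N ≤ 2 * (Q ^ N - Q ^ j) := by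
  have : 2 * Q ^ j ≤ Q ^ N :=
    calc 2 * Q ^ j ≤ Q ^ (j + 1) := by rw [pow_succ']; exact Nat.mul_le_mul_right _ hQ
      _ ≤ Q ^ N := Nat.pow_le_pow_right (by omega) hj
  omega

theorem mul_prod_range_mul_lt_prod_range {f : ℕ → ℕ} {a m c : ℕ} (ha : 2 ≤ a) (hm : 0 < m)
    (hf : ∀ j < a * m, 0 < f j) (hc : c < f (a * m - 1)) :
    c * ∏ i ∈ range m, f (a * i) < ∏ j ∈ range (a * m), f j := by
  set S := (range m).image (a * ·)
  have hS : S ⊆ range (a * m) := by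
    simp only [S, image_subset_iff, mem_range]
    exact fun i hi => Nat.mul_lt_mul_of_pos_left hi (by omega)
  have hlast : a * m - 1 ∉ S := by
    simp only [S, mem_image, mem_range, not_exists, not_and]
    intro i hi hai
    have : a * (i + 1) ≤ a * m := Nat.mul_le_mul_left a hi
    rw [Nat.mul_add, mul_one] at this
    omega
  have hreindex : ∏ i ∈ range m, f (a * i) = ∏ j ∈ S, f j :=
    (prod_image fun x _ y _ h => Nat.eq_of_mul_eq_mul_left (by omega) h).symm
  have hpos : 0 < ∏ j ∈ S, f j := prod_pos fun j hj => hf j (mem_range.mp (hS hj))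
  calc c * ∏ i ∈ range m, f (a * i) < f (a * m - 1) * ∏ j ∈ S, f j := by
        rw [hreindex]; exact Nat.mul_lt_mul_of_pos_right hc hpos
    _ = ∏ j ∈ insert (a * m - 1) S, f j := (prod_insert hlast).symm
    _ ≤ ∏ j ∈ range (a * m), f j := by
        refine prod_le_prod_of_subset_of_one_le' (insert_subset ?_ hS)
          fun j hj _ => hf j (mem_range.mp hj)
        exact mem_range.mpr (by have := Nat.mul_le_mul ha hm; omega)

theorem stmt5_general (q n s t : ℕ) (hq : 2 ≤ q) (hn : 4 ≤ n) (hst : s ∣ t) (htn : t ∣ n)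
    (hne : s ≠ t) :
    n * ∏ i ∈ Finset.range (n / t), ((q ^ s) ^ (n / s) - (q ^ s) ^ ((t / s) * i)) <
      ∏ i ∈ Finset.range (n / s), ((q ^ s) ^ (n / s) - (q ^ s) ^ i) := by
  obtain ⟨a, rfl⟩ := hst
  obtain ⟨m, rfl⟩ := htn
  have hs : 0 < s := Nat.pos_of_ne_zero fun h => hne (by simp [h])
  have ha : 2 ≤ a := by
    rcases a with _ | _ | a <;> simp_all
  have hm : 0 < m := Nat.pos_of_ne_zero fun h => by simp [h] at hn
  rw [Nat.mul_div_cancel_left m (Nat.mul_pos hs (by omega) : 0 < s * a),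
    Nat.mul_div_cancel_left a hs, mul_assoc s a m, Nat.mul_div_cancel_left _ hs]
  rw [mul_assoc s a m] at hn
  have hQ : 2 ≤ q ^ s := hq.trans (Nat.le_self_pow hs.ne' q)
  refine mul_prod_range_mul_lt_prod_range ha hm
    (fun j hj => Nat.sub_pos_of_lt (Nat.pow_lt_pow_right hQ hj)) ?_
  have hlast : (q ^ s) ^ (a * m) ≤ 2 * ((q ^ s) ^ (a * m) - (q ^ s) ^ (a * m - 1)) :=
    Nat.pow_le_two_mul_pow_sub_pow hQ (Nat.sub_one_lt (Nat.mul_pos (by omega) hm).ne')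
  have hpow : 2 ^ (s * (a * m)) ≤ (q ^ s) ^ (a * m) := by
    rw [← pow_mul]; exact Nat.pow_le_pow_left hq _
  have hn_lt : 2 * (s * (a * m)) < 2 ^ (s * (a * m)) := Nat.two_mul_lt_two_pow (by omega)
  omega

/-- For `q ≥ 2`, `n ≥ 4`, `s ∣ t ∣ n`, `s ≠ t`, with `q̂ = q^s`, `n̂ = n/s`, `a = t/s`:
`∏_{i=0}^{n̂-1}(q̂^n̂ - q̂^i) > n · ∏_{i=0}^{n̂/a-1}(q̂^n̂ - q̂^{ai})`,
i.e. `|GL_{n/s}(q^s)| > |N_{GL_n(q)}(GL_{n/t}(q^t))|`. -/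
theorem stmt5 (q n s t : ℕ) (hq : 2 ≤ q) (hn : 4 ≤ n) (hst : s ∣ t) (htn : t ∣ n)
    (hne : s ≠ t) (hs : 1 ≤ s) :
    n * ∏ i ∈ Finset.range (n / t), ((q ^ s) ^ (n / s) - (q ^ s) ^ ((t / s) * i)) <
      ∏ i ∈ Finset.range (n / s), ((q ^ s) ^ (n / s) - (q ^ s) ^ i) :=
  stmt5_general q n s t hq hn hst htn hne
end

section
/- Let q be a prime power, n ≥ 4, and let r, k, s be integers with 3 ≤ r ≤ k ≤ n/2, 1 ≤ s < n, rs ≤ n. Then q^{(s-1)·r(r-1)/2} · ∏_{i=0}^{r-1} (q^{n-is} - 1)/(q^{r-i} - 1) > n · [k choose r]_q · (q^n - 1)/(q - 1), where [k choose r]_q is the Gaussian binomial coefficient. -/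
/-!
Clearing the common denominator `∏ (q^{r-i} - 1)`, the claim becomes
`n · ∏ (q^{k-i} - 1) · (q^n - 1)/(q - 1) < q^{(s-1)T} · ∏ (q^{n-is} - 1)` with `T = r(r-1)/2`.
Bound each factor on the left above by a pure power of `q`, and the right-hand product below by
`q^{∑(n-is)} (1 - ∑ q^{-(n-is)}) ≥ q^{∑(n-is)} (1 - 2 q^{-m})`, where `m = n - (r-1)s ≥ 2`.
The powers of `q` then cancel up to `q^{r(n-k)}` with `2 r(n-k) ≥ 3n`, which leaves the elementary
estimate `n ≤ (q - 1)(1 - 2 q^{-m}) q^{r(n-k)-n}`. It fails only for `q = 2`, `n = 6`, `r = k = 3`,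
`s = 2`, where the original inequality `378 < 1080` is checked directly.
-/

/-- The Gaussian binomial coefficient `[k choose r]_q` as a rational number. -/
def gaussBinom (q : ℚ) (k r : ℕ) : ℚ :=
  ∏ i ∈ Finset.range r, (q ^ (k - i) - 1) / (q ^ (r - i) - 1)

open Finset

theorem sum_range_sub_mul_add (n r s : ℕ) (h : (r - 1) * s ≤ n) :
    ∑ i ∈ range r, (n - i * s) + s * (r * (r - 1) / 2) = r * n := by
  rw [← sum_range_id, mul_sum, ← sum_add_distrib, sum_congr rfl (g := fun _ => n) fun i hi => ?_]
  · simp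
  · have : i * s ≤ (r - 1) * s := Nat.mul_le_mul_right s (by simp at hi; omega)
    rw [mul_comm s i]
    exact Nat.sub_add_cancel (this.trans h)

theorem mul_sub_add_sum_range_sub {n r k s : ℕ} (hrk : r - 1 ≤ k) (hkn : k ≤ n) (hs : 1 ≤ s)
    (hrs : (r - 1) * s ≤ n) :
    r * (n - k) + ∑ i ∈ range r, (k - i) =
      (s - 1) * (r * (r - 1) / 2) + ∑ i ∈ range r, (n - i * s) := by
  have hk := sum_range_sub_mul_add k r 1 (by omega)
  have hn := sum_range_sub_mul_add n r s hrs
  have hrn : r * (n - k) + r * k = r * n := by rw [← mul_add, Nat.sub_add_cancel hkn]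
  have hsT : (s - 1) * (r * (r - 1) / 2) + r * (r - 1) / 2 = s * (r * (r - 1) / 2) := by
    rw [← Nat.succ_mul, Nat.succ_eq_add_one, Nat.sub_add_cancel hs]
  simp only [mul_one, one_mul] at hk
  omega

theorem four_mul_le_two_pow {e : ℕ} (he : 4 ≤ e) : 4 * e ≤ 2 ^ e := by
  induction e, he using Nat.le_induction with
  | base => norm_num
  | succ e he ih => rw [pow_succ]; omega

theorem four_mul_le_three_mul_two_pow {n e : ℕ} (hn : 6 ≤ n) (he : n ≤ 2 * e) :
    4 * n ≤ 3 * 2 ^ e := by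
  rcases (show n = 6 ∨ 7 ≤ n by omega) with rfl | hn
  · have : 2 ^ 3 ≤ 2 ^ e := Nat.pow_le_pow_right (by norm_num) (by omega)
    omega
  · have := four_mul_le_two_pow (show 4 ≤ e by omega)
    omega

section OrderedField

variable {K : Type*} [Field K] [LinearOrder K] [IsStrictOrderedRing K]

theorem one_sub_sum_le_prod_one_sub {ι : Type*} [LinearOrder ι] (s : Finset ι) {f : ι → K}
    (h0 : ∀ i ∈ s, 0 ≤ f i) (h1 : ∀ i ∈ s, f i ≤ 1) :
    1 - ∑ i ∈ s, f i ≤ ∏ i ∈ s, (1 - f i) := by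
  rw [prod_one_sub_ordered]
  refine sub_le_sub_left (sum_le_sum fun i hi => mul_le_of_le_one_right (h0 i hi) ?_) 1
  refine prod_le_one (fun j hj => ?_) fun j hj => ?_
  · linarith [h1 j (mem_filter.1 hj).1]
  · linarith [h0 j (mem_filter.1 hj).1]

theorem prod_pow_sub_one_le_pow_sum {ι : Type*} (s : Finset ι) (e : ι → ℕ) {x : K}
    (hx : 1 ≤ x) : ∏ i ∈ s, (x ^ e i - 1) ≤ x ^ ∑ i ∈ s, e i := by
  rw [← prod_pow_eq_pow_sum]
  exact prod_le_prod (fun i _ => sub_nonneg.2 (one_le_pow₀ hx)) fun i _ =>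
    sub_le_self _ zero_le_one

theorem pow_sum_mul_one_sub_sum_inv_le_prod {ι : Type*} [LinearOrder ι] (s : Finset ι)
    (e : ι → ℕ) {x : K} (hx : 1 ≤ x) :
    x ^ (∑ i ∈ s, e i) * (1 - ∑ i ∈ s, (x ^ e i)⁻¹) ≤ ∏ i ∈ s, (x ^ e i - 1) := by
  have hpos : ∀ j, 0 < x ^ j := fun j => pow_pos (zero_lt_one.trans_le hx) j
  have hfactor : ∏ i ∈ s, (x ^ e i - 1) = x ^ (∑ i ∈ s, e i) * ∏ i ∈ s, (1 - (x ^ e i)⁻¹) := by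
    rw [← prod_pow_eq_pow_sum, ← prod_mul_distrib]
    refine prod_congr rfl fun i _ => ?_
    rw [mul_sub, mul_one, mul_inv_cancel₀ (hpos _).ne']
  rw [hfactor]
  exact mul_le_mul_of_nonneg_left (one_sub_sum_le_prod_one_sub s
    (fun i _ => (inv_pos.2 (hpos _)).le) fun i _ => inv_le_one_of_one_le₀ (one_le_pow₀ hx))
    (hpos _).le

theorem sum_range_inv_pow_add_mul_le {x : K} (hx : 2 ≤ x) (m s r : ℕ) (hs : 1 ≤ s) :
    ∑ j ∈ range r, (x ^ (m + j * s))⁻¹ ≤ 2 * (x ^ m)⁻¹ := by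
  have hterm : ∀ j, (x ^ (m + j * s))⁻¹ ≤ (x ^ m)⁻¹ * 2⁻¹ ^ j := fun j => by
    rw [inv_pow (2 : K) j, ← mul_inv, pow_add]
    refine inv_anti₀ (by positivity) (mul_le_mul_of_nonneg_left ?_ (by positivity))
    exact (pow_le_pow_left₀ (by norm_num) hx j).trans
      (pow_le_pow_right₀ (by linarith) (Nat.le_mul_of_pos_right j hs))
  have hgeom : ∑ j ∈ range r, (2⁻¹ : K) ^ j ≤ 2 := by
    rw [range_eq_Ico]
    exact (geom_sum_Ico_le_of_lt_one (by norm_num) (by norm_num)).trans (by norm_num)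
  calc ∑ j ∈ range r, (x ^ (m + j * s))⁻¹
      ≤ ∑ j ∈ range r, (x ^ m)⁻¹ * 2⁻¹ ^ j := sum_le_sum fun j _ => hterm j
    _ = (x ^ m)⁻¹ * ∑ j ∈ range r, 2⁻¹ ^ j := (mul_sum ..).symm
    _ ≤ (x ^ m)⁻¹ * 2 := by gcongr
    _ = 2 * (x ^ m)⁻¹ := mul_comm _ _

theorem sum_range_inv_pow_sub_mul_le {x : K} (hx : 2 ≤ x) {n r s : ℕ} (hs : 1 ≤ s)
    (hrs : (r - 1) * s ≤ n) :
    ∑ i ∈ range r, (x ^ (n - i * s))⁻¹ ≤ 2 * (x ^ (n - (r - 1) * s))⁻¹ := by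
  rw [← sum_range_reflect]
  convert sum_range_inv_pow_add_mul_le hx (n - (r - 1) * s) s r hs using 4 with j hj
  have : j * s + (r - 1 - j) * s = (r - 1) * s := by
    rw [← add_mul, Nat.add_sub_cancel' (by simp at hj; omega)]
  omega

theorem natCast_le_sub_one_mul_one_sub_two_mul_inv_pow_mul_pow {x : K} (hx : 2 ≤ x) {n m e : ℕ}
    (hn : 6 ≤ n) (hm : 2 ≤ m) (he : n ≤ 2 * e) (h : 3 ≤ m ∨ 3 ≤ x ∨ 7 ≤ n) :
    (n : K) ≤ (x - 1) * (1 - 2 * (x ^ m)⁻¹) * x ^ e := by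
  have hinv : ∀ j ≤ m, (x ^ m)⁻¹ ≤ (2 ^ j)⁻¹ := fun j hj =>
    inv_anti₀ (by positivity)
      ((pow_le_pow_left₀ (by norm_num) hx j).trans (pow_le_pow_right₀ (by linarith) hj))
  have hpow : (2 : K) ^ e ≤ x ^ e := pow_le_pow_left₀ (by norm_num) hx e
  suffices ∃ a b : K, 0 ≤ a ∧ 0 ≤ b ∧ a ≤ x - 1 ∧ b ≤ 1 - 2 * (x ^ m)⁻¹ ∧ (n : K) ≤ a * b * 2 ^ e by
    obtain ⟨a, b, ha, hb, hax, hbx, hn⟩ := this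
    exact hn.trans (mul_le_mul (mul_le_mul hax hbx hb (by linarith)) hpow (by positivity)
      (mul_nonneg (by linarith) (hb.trans hbx)))
  have h43 : (4 * n : K) ≤ 3 * 2 ^ e := by exact_mod_cast four_mul_le_three_mul_two_pow hn he
  rcases h with hm3 | hx3 | hn7
  · refine ⟨1, 3 / 4, by norm_num, by norm_num, by linarith, ?_, by linarith⟩
    linarith [hinv 3 hm3]
  · refine ⟨2, 1 / 2, by norm_num, by norm_num, by linarith, ?_, by linarith⟩
    linarith [hinv 2 hm]
  · have h2 : (2 * n : K) ≤ 2 ^ e := by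
      have := four_mul_le_two_pow (show 4 ≤ e by omega)
      exact_mod_cast (show 2 * n ≤ 2 ^ e by omega)
    refine ⟨1, 1 / 2, by norm_num, by norm_num, by linarith, ?_, by linarith⟩
    linarith [hinv 2 hm]

theorem natCast_mul_prod_mul_geom_lt_pow_mul_prod {x : K} (hx : 2 ≤ x) {n r k s : ℕ}
    (hr : 3 ≤ r) (hrk : r ≤ k) (hkn : 2 * k ≤ n) (hs : 1 ≤ s) (hrs : r * s ≤ n)
    (h : 3 ≤ n - (r - 1) * s ∨ 3 ≤ x ∨ 7 ≤ n) :
    n * (∏ i ∈ range r, (x ^ (k - i) - 1)) * ((x ^ n - 1) / (x - 1)) <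
      x ^ ((s - 1) * (r * (r - 1) / 2)) * ∏ i ∈ range r, (x ^ (n - i * s) - 1) := by
  set m := n - (r - 1) * s
  set R := r * (n - k)
  have hrs_pred : (r - 1) * s + s = r * s := by
    rw [← Nat.succ_mul, Nat.succ_eq_add_one, Nat.sub_add_cancel (by omega)]
  have hm : 2 ≤ m := by
    rcases hs.eq_or_lt with rfl | hs2
    · simp only [mul_one, m]; omega
    · omega
  have hR : 3 * (n - k) ≤ R := Nat.mul_le_mul_right _ hr
  have hexp := mul_sub_add_sum_range_sub (show r - 1 ≤ k by omega) (show k ≤ n by omega) hs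
    (show (r - 1) * s ≤ n by omega)
  have hnum := natCast_le_sub_one_mul_one_sub_two_mul_inv_pow_mul_pow hx (e := R - n)
    (by omega) hm (by omega) h
  have hx1 : 0 < x - 1 := by linarith
  have hxn : 1 ≤ x ^ n := one_le_pow₀ (by linarith)
  have hn0 : (0 : K) < n := by exact_mod_cast (show 0 < n by omega)
  have hRn : x ^ (R - n) * x ^ n = x ^ R := by rw [← pow_add, Nat.sub_add_cancel (by omega)]
  calc (n : K) * (∏ i ∈ range r, (x ^ (k - i) - 1)) * ((x ^ n - 1) / (x - 1))
      ≤ n * x ^ (∑ i ∈ range r, (k - i)) * ((x ^ n - 1) / (x - 1)) := by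
        refine mul_le_mul_of_nonneg_right ?_ (div_nonneg (by linarith) hx1.le)
        exact mul_le_mul_of_nonneg_left (prod_pow_sub_one_le_pow_sum _ _ (by linarith)) hn0.le
    _ < n * x ^ (∑ i ∈ range r, (k - i)) * (x ^ n / (x - 1)) := by
        gcongr
        linarith
    _ = n * x ^ n * x ^ (∑ i ∈ range r, (k - i)) / (x - 1) := by ring
    _ ≤ (x - 1) * (1 - 2 * (x ^ m)⁻¹) * x ^ (R - n) * x ^ n *
          x ^ (∑ i ∈ range r, (k - i)) / (x - 1) := by gcongr
    _ = x ^ (R + ∑ i ∈ range r, (k - i)) * (1 - 2 * (x ^ m)⁻¹) := by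
        rw [pow_add, ← hRn]
        field_simp
    _ = x ^ ((s - 1) * (r * (r - 1) / 2)) *
          (x ^ (∑ i ∈ range r, (n - i * s)) * (1 - 2 * (x ^ m)⁻¹)) := by
        rw [hexp, pow_add, mul_assoc]
    _ ≤ x ^ ((s - 1) * (r * (r - 1) / 2)) *
          (x ^ (∑ i ∈ range r, (n - i * s)) * (1 - ∑ i ∈ range r, (x ^ (n - i * s))⁻¹)) := by
        gcongr
        linarith [sum_range_inv_pow_sub_mul_le hx hs (by omega : (r - 1) * s ≤ n)]
    _ ≤ x ^ ((s - 1) * (r * (r - 1) / 2)) * ∏ i ∈ range r, (x ^ (n - i * s) - 1) := by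
        gcongr
        exact pow_sum_mul_one_sub_sum_inv_le_prod _ _ (by linarith)

end OrderedField

theorem stmt6_general (q n r k s : ℕ) (hq : 2 ≤ q) (hr : 3 ≤ r) (hrk : r ≤ k)
    (hkn : 2 * k ≤ n) (hs : 1 ≤ s) (hrs : r * s ≤ n) :
    (n : ℚ) * gaussBinom (q : ℚ) k r * (((q : ℚ) ^ n - 1) / ((q : ℚ) - 1)) <
      (q : ℚ) ^ ((s - 1) * (r * (r - 1) / 2)) *
        ∏ i ∈ Finset.range r, (((q : ℚ) ^ (n - i * s) - 1) / ((q : ℚ) ^ (r - i) - 1)) := by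
  by_cases hgen : 3 ≤ n - (r - 1) * s ∨ 3 ≤ q ∨ 7 ≤ n
  · have hx : (2 : ℚ) ≤ q := by exact_mod_cast hq
    have hD : 0 < ∏ i ∈ range r, ((q : ℚ) ^ (r - i) - 1) := prod_pos fun i hi =>
      sub_pos.2 (one_lt_pow₀ (by linarith) (by simp at hi; omega))
    have key := natCast_mul_prod_mul_geom_lt_pow_mul_prod hx hr hrk hkn hs hrs
      (hgen.imp_right (Or.imp_left fun h => by exact_mod_cast h))
    rw [gaussBinom, prod_div_distrib, prod_div_distrib]
    exact ((div_lt_div_of_pos_right key hD).trans_eq' (by ring)).trans_eq (by ring)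
  · obtain rfl : q = 2 := by omega
    obtain rfl : n = 6 := by omega
    obtain rfl : r = 3 := by omega
    obtain rfl : k = 3 := by omega
    obtain rfl : s = 2 := by omega
    norm_num [gaussBinom, prod_range_succ]

/-- For `q ≥ 2`, `n ≥ 4`, `3 ≤ r ≤ k ≤ n/2`, `1 ≤ s < n`, `rs ≤ n`:
`q^{(s-1)·r(r-1)/2} ∏_{i=0}^{r-1}(q^{n-is}-1)/(q^{r-i}-1) > n [k choose r]_q (q^n-1)/(q-1)`. -/
theorem stmt6 (q n r k s : ℕ) (hq : 2 ≤ q) (hn : 4 ≤ n) (hr : 3 ≤ r) (hrk : r ≤ k)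
    (hkn : 2 * k ≤ n) (hs : 1 ≤ s) (hsn : s < n) (hrs : r * s ≤ n) :
    (n : ℚ) * gaussBinom (q : ℚ) k r * (((q : ℚ) ^ n - 1) / ((q : ℚ) - 1)) <
      (q : ℚ) ^ ((s - 1) * (r * (r - 1) / 2)) *
        ∏ i ∈ Finset.range r, (((q : ℚ) ^ (n - i * s) - 1) / ((q : ℚ) ^ (r - i) - 1)) :=
  stmt6_general q n r k s hq hr hrk hkn hs hrs
end

section
/- Let q ≥ 2 be an integer and n, k, s integers with 4 ≤ n, 2 ≤ k ≤ 3n/8, s ≤ n/2, and suppose (q,n,k) ∉ {(2,8,3),(2,11,4)}. Then (q-1)(q^n - q^s) - n(q^k - 1)(q^k - q) > 0. -/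
/-!
Put `u = ⌈n/4⌉ - 2`. Since `8k ≤ 3n` we have `2k + u + 2 ≤ n`, so the subtracted term is at most
`n q^(2k) ≤ n q^(n-2-u)`, while `s ≤ n - 2` gives `(q-1)(q^n - q^s) ≥ (q-1)(q^2-1) q^(n-2)`.
The inequality therefore follows from `n < (q-1)(q^2-1) q^u`, which holds for every `q ≥ 3` and,
for `q = 2`, as soon as `n ≥ 17`. The finitely many cases `q = 2`, `n ≤ 16` are checked directly,
using `s ≤ n/2`; the two exceptions are among them.
-/

lemma sub_one_mul_sub_le_sq {R : Type*} [CommRing R] [LinearOrder R] [IsStrictOrderedRing R]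
    {x q : R} (hx : 1 ≤ x) (hq : 0 ≤ q) : (x - 1) * (x - q) ≤ x ^ 2 := by
  nlinarith

lemma sub_pos_of_lt_mul_pow {q : ℤ} {n k s u : ℕ} (hq : 1 ≤ q) (hku : 2 * k + u + 2 ≤ n)
    (hs : s + 2 ≤ n) (h : (n : ℤ) < (q - 1) * (q ^ 2 - 1) * q ^ u) :
    0 < (q - 1) * (q ^ n - q ^ s) - (n : ℤ) * ((q ^ k - 1) * (q ^ k - q)) := by
  have hsplit : q ^ (n - 2) = q ^ u * q ^ (n - 2 - u) := by rw [← pow_add]; congr 1; omega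
  have hn : q ^ n = q ^ 2 * q ^ (n - 2) := by rw [← pow_add]; congr 1; omega
  rw [sub_pos]
  calc (n : ℤ) * ((q ^ k - 1) * (q ^ k - q))
      ≤ n * q ^ (n - 2 - u) := by
        gcongr
        calc (q ^ k - 1) * (q ^ k - q) ≤ (q ^ k) ^ 2 :=
              sub_one_mul_sub_le_sq (one_le_pow₀ hq) (by linarith)
          _ = q ^ (2 * k) := by ring
          _ ≤ q ^ (n - 2 - u) := pow_le_pow_right₀ hq (by omega)
    _ < (q - 1) * (q ^ 2 - 1) * q ^ u * q ^ (n - 2 - u) := by gcongr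
    _ = (q - 1) * (q ^ n - q ^ (n - 2)) := by rw [hn, hsplit]; ring
    _ ≤ (q - 1) * (q ^ n - q ^ s) := by
        gcongr
        omega

lemma four_mul_add_eight_lt_mul_pow {q : ℤ} (hq : 3 ≤ q) (u : ℕ) :
    4 * (u : ℤ) + 8 < (q - 1) * (q ^ 2 - 1) * q ^ u := by
  have hu : 4 * u + 8 < 16 * 2 ^ u := by
    have := u.lt_two_pow_self
    omega
  calc 4 * (u : ℤ) + 8 < 16 * 2 ^ u := by exact_mod_cast hu
    _ ≤ (q - 1) * (q ^ 2 - 1) * q ^ u := by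
        have hq1 : 2 ≤ q - 1 := by linarith
        have hq2 : 8 ≤ q ^ 2 - 1 := by nlinarith
        gcongr
        · nlinarith
        · linarith

lemma four_mul_add_eight_lt_three_mul_two_pow {u : ℕ} (hu : 3 ≤ u) :
    4 * (u : ℤ) + 8 < 3 * 2 ^ u := by
  obtain ⟨v, rfl⟩ := Nat.exists_eq_add_of_le' hu
  have := v.lt_two_pow_self
  have : 4 * (v + 3) + 8 < 3 * 2 ^ (v + 3) := by
    rw [pow_add]
    omega
  exact_mod_cast this

lemma sub_pos_two_of_lt_seventeen {n k s : ℕ} (hn : n < 17) (hk : 2 ≤ k) (hk2 : 8 * k ≤ 3 * n)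
    (hsn : 2 * s ≤ n) (hex1 : ¬(n = 8 ∧ k = 3)) (hex2 : ¬(n = 11 ∧ k = 4)) :
    0 < ((2 : ℤ) - 1) * (2 ^ n - 2 ^ s) - (n : ℤ) * ((2 ^ k - 1) * (2 ^ k - 2)) := by
  have hs : (2 : ℤ) ^ s ≤ 2 ^ (n / 2) := pow_le_pow_right₀ (by norm_num) (by omega)
  have hk6 : k ≤ 6 := by omega
  interval_cases n <;> interval_cases k <;> simp_all <;> linarith

theorem stmt8_general (q : ℤ) (n k s : ℕ) (hq : 2 ≤ q) (hk : 2 ≤ k)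
    (hk2 : 8 * k ≤ 3 * n) (hsn : 2 * s ≤ n)
    (hex1 : ¬(q = 2 ∧ n = 8 ∧ k = 3)) (hex2 : ¬(q = 2 ∧ n = 11 ∧ k = 4)) :
    0 < (q - 1) * (q ^ n - q ^ s) - (n : ℤ) * ((q ^ k - 1) * (q ^ k - q)) := by
  set u := (n + 3) / 4 - 2 with hu
  have hnu : (n : ℤ) ≤ 4 * u + 8 := by omega
  have hku : 2 * k + u + 2 ≤ n := by omega
  rcases (show q = 2 ∨ 3 ≤ q by omega) with rfl | hq3
  · rcases lt_or_ge n 17 with hn17 | hn17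
    · exact sub_pos_two_of_lt_seventeen hn17 hk hk2 hsn (hex1 ⟨rfl, ·⟩) (hex2 ⟨rfl, ·⟩)
    · refine sub_pos_of_lt_mul_pow (by norm_num) hku (by omega) ?_
      have := four_mul_add_eight_lt_three_mul_two_pow (u := u) (by omega)
      norm_num
      linarith
  · exact sub_pos_of_lt_mul_pow (by linarith) hku (by omega)
      (hnu.trans_lt (four_mul_add_eight_lt_mul_pow hq3 u))

/-- For `q ≥ 2`, `4 ≤ n`, `2 ≤ k ≤ 3n/8`, `1 ≤ s ≤ n/2`, excluding
`(q,n,k) ∈ {(2,8,3),(2,11,4)}`: `(q-1)(q^n - q^s) - n(q^k-1)(q^k-q) > 0`. -/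
theorem stmt8 (q : ℤ) (n k s : ℕ) (hq : 2 ≤ q) (hn : 4 ≤ n) (hk : 2 ≤ k)
    (hk2 : 8 * k ≤ 3 * n) (hs : 1 ≤ s) (hsn : 2 * s ≤ n)
    (hex1 : ¬(q = 2 ∧ n = 8 ∧ k = 3)) (hex2 : ¬(q = 2 ∧ n = 11 ∧ k = 4)) :
    0 < (q - 1) * (q ^ n - q ^ s) - (n : ℤ) * ((q ^ k - 1) * (q ^ k - q)) :=
  stmt8_general q n k s hq hk hk2 hsn hex1 hex2
end

section
/- Let q be a prime power, s a divisor of n, and 𝒰 a k-dimensional F_q-subspace of F_{q^n} whose F_{q^s}-span has F_{q^s}-dimension equal to k (i.e., some F_q-basis of 𝒰 is F_{q^s}-linearly independent). Then the orbit of 𝒰 under the group of F_{q^s}-linear automorphisms of F_{q^n} has cardinality ∏_{i=0}^{k-1}(q^n - q^{is}) / ∏_{i=0}^{k-1}(q^k - q^i). -/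
/-!
Count `E`-linearly independent `k`-tuples in `K` by the `F`-subspace they span. Since
`GL_E(K)` acts transitively on such tuples, the spans are exactly the orbit of `𝒰`, which is
spanned by an `F`-basis that is `E`-independent. Conversely, any `F`-basis of an orbit member
`V` spans over `E` the `k`-dimensional space `span_E V`, so it is `E`-independent; hence every
fibre is the set of `F`-bases of a `k`-dimensional `F`-space and has `∏_{i<k} (q^k - q^i)`
elements (`q = |F|`), while there are `∏_{i<k} (|K| - |E|^i)` tuples in total.
-/

open Module Submodule Set

theorem Nat.card_eq_ncard_range_mul {α β : Type*} [Finite α] (f : α → β) {c : ℕ}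
    (hc : ∀ a, Nat.card {a' // f a' = f a} = c) : Nat.card α = (range f).ncard * c := by
  have := Fintype.ofFinite (range f)
  have hfiber (b : range f) : Nat.card {a // rangeFactorization f a = b} = c := by
    obtain ⟨_, a, rfl⟩ := b
    simpa [Subtype.ext_iff, rangeFactorization] using hc a
  rw [← Nat.card_congr (Equiv.sigmaFiberEquiv (rangeFactorization f)), Nat.card_sigma,
    Finset.sum_congr rfl fun b _ => hfiber b, Finset.sum_const, smul_eq_mul, Finset.card_univ,
    ← Nat.card_eq_fintype_card, Nat.card_coe_set_eq]

theorem Module.Basis.sumExtend_inl {K V ι : Type*} [DivisionRing K] [AddCommGroup V] [Module K V]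
    {v : ι → V} (hs : LinearIndependent K v) (i : ι) : Basis.sumExtend hs (.inl i) = v i := by
  rw [sumExtend, reindex_apply, coe_extend]
  rfl

theorem LinearIndependent.exists_linearEquiv_comp_eq {K V ι : Type*} [DivisionRing K]
    [AddCommGroup V] [Module K V] [FiniteDimensional K V] [Finite ι] {v w : ι → V}
    (hv : LinearIndependent K v) (hw : LinearIndependent K w) :
    ∃ φ : V ≃ₗ[K] V, φ ∘ v = w := by
  have := (Module.Finite.finite_basis (Basis.sumExtend hv)).of_injective _ Sum.inr_injective
  have := (Module.Finite.finite_basis (Basis.sumExtend hw)).of_injective _ Sum.inr_injective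
  have hcard := (finrank_eq_nat_card_basis (Basis.sumExtend hv)).symm.trans
    (finrank_eq_nat_card_basis (Basis.sumExtend hw))
  rw [Nat.card_sum, Nat.card_sum, Nat.add_left_cancel_iff] at hcard
  obtain ⟨e⟩ := Finite.card_eq.mp hcard
  refine ⟨(Basis.sumExtend hv).equiv (Basis.sumExtend hw) (Equiv.sumCongr (.refl ι) e), ?_⟩
  ext i
  simpa [Basis.sumExtend_inl] using
    (Basis.sumExtend hv).equiv_apply (.inl i) (Basis.sumExtend hw) (Equiv.sumCongr (.refl ι) e)

section Tower

variable {F E M : Type*} [Field F] [Field E] [Algebra F E]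
  [AddCommGroup M] [Module F M] [Module E M] [IsScalarTower F E M]

variable (F) in
theorem linearIndependent_iff_card_eq_finrank_span_span {ι : Type*} [Fintype ι]
    {v : ι → M} :
    LinearIndependent E v ↔ Fintype.card ι = finrank E (span E (span F (range v) : Set M)) := by
  rw [linearIndependent_iff_card_eq_finrank_span, span_span_of_tower, Set.finrank]

theorem LinearIndependent.of_span_eq_span {ι : Type*} [Fintype ι] {v w : ι → M}
    (hw : LinearIndependent E w) (h : span F (range v) = span F (range w)) :
    LinearIndependent E v := by
  rw [linearIndependent_iff_card_eq_finrank_span_span F, h]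
  exact (linearIndependent_iff_card_eq_finrank_span_span F).mp hw

namespace Submodule

theorem span_range_eq_top_iff {ι : Type*} (V : Submodule F M) (w : ι → V) :
    span F (range w) = ⊤ ↔ span F (range fun i => (w i : M)) = V := by
  rw [← (map_injective_of_injective V.injective_subtype).eq_iff, map_subtype_top, map_span,
    ← range_comp]
  rfl

variable (E) in
def linearAutOrbit (U : Submodule F M) : Set (Submodule F M) :=
  {V | ∃ φ : M ≃ₗ[E] M, V = U.map (φ.toLinearMap.restrictScalars F)}

theorem map_restrictScalars_span_range {ι : Type*} (φ : M →ₗ[E] M) (v : ι → M) :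
    (span F (range v)).map (φ.restrictScalars F) = span F (range (φ ∘ v)) := by
  rw [map_span, ← range_comp]
  rfl

theorem linearAutOrbit_span_eq_range [FiniteDimensional E M] {ι : Type*} [Finite ι] {b : ι → M}
    (hb : LinearIndependent E b) :
    linearAutOrbit E (span F (range b)) =
      range fun v : {v : ι → M // LinearIndependent E v} => span F (range v.1) := by
  ext V
  constructor
  · rintro ⟨φ, rfl⟩
    exact ⟨⟨φ ∘ b, hb.map' φ.toLinearMap φ.ker⟩, (map_restrictScalars_span_range _ b).symm⟩
  · rintro ⟨⟨v, hv⟩, rfl⟩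
    obtain ⟨φ, rfl⟩ := hb.exists_linearEquiv_comp_eq hv
    exact ⟨φ, (map_restrictScalars_span_range _ b).symm⟩

theorem card_span_range_eq [Fintype F] [Finite M] {k : ℕ} (V : Submodule F M)
    (hV : finrank F V = k) :
    Nat.card {v : Fin k → M // span F (range v) = V} =
      ∏ i : Fin k, (Fintype.card F ^ k - Fintype.card F ^ (i : ℕ)) := by
  rw [← hV, ← card_linearIndependent le_rfl, hV]
  refine Nat.card_congr
    { toFun := fun v => ⟨fun i => ⟨v.1 i, v.2.le (subset_span (mem_range_self i))⟩, ?_⟩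
      invFun := fun w => ⟨fun i => w.1 i, ?_⟩
      left_inv := fun _ => rfl
      right_inv := fun _ => rfl }
  · exact linearIndependent_of_top_le_span_of_card_eq_finrank
      ((span_range_eq_top_iff V _).mpr v.2).ge ((Fintype.card_fin k).trans hV.symm)
  · exact (span_range_eq_top_iff V w.1).mp
      (w.2.span_eq_top_of_card_eq_finrank' ((Fintype.card_fin k).trans hV.symm))

theorem card_span_range_eq_span_range [Fintype F] [Finite M] {k : ℕ} {v₀ : Fin k → M}
    (hv₀ : LinearIndependent E v₀) :
    Nat.card {v : {v : Fin k → M // LinearIndependent E v} //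
        span F (range v.1) = span F (range v₀)} =
      ∏ i : Fin k, (Fintype.card F ^ k - Fintype.card F ^ (i : ℕ)) := by
  rw [Nat.card_congr (Equiv.subtypeSubtypeEquivSubtype hv₀.of_span_eq_span),
    card_span_range_eq _
      ((finrank_span_eq_card (hv₀.restrict_scalars' F)).trans (Fintype.card_fin k))]

end Submodule

end Tower

/-- Let `F ⊆ E ⊆ K` be finite fields (`F = F_q`, `E = F_{q^s}`, `K = F_{q^n}`) and `𝒰`
a `k`-dimensional `F`-subspace of `K` whose `E`-span has `E`-dimension `k`. Then the orbit
of `𝒰` under the `E`-linear automorphisms of `K` has cardinality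
`∏_{i<k}(q^n - q^{is}) / ∏_{i<k}(q^k - q^i)`. -/
theorem stmt11 (F E K : Type*) [Field F] [Field E] [Field K]
    [Algebra F E] [Algebra E K] [Algebra F K] [IsScalarTower F E K]
    [Fintype F] [Fintype E] [Fintype K]
    (k : ℕ) (𝒰 : Submodule F K) (hdim : Module.finrank F ↥𝒰 = k)
    (hspan : Module.finrank E ↥(Submodule.span E (𝒰 : Set K)) = k) :
    Set.ncard {V : Submodule F K | ∃ φ : K ≃ₗ[E] K,
        V = 𝒰.map (φ.toLinearMap.restrictScalars F)} *
      ∏ i ∈ Finset.range k, (Fintype.card F ^ k - Fintype.card F ^ i)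
      = ∏ i ∈ Finset.range k, (Fintype.card K - Fintype.card E ^ i) := by
  let B := finBasisOfFinrankEq F 𝒰 hdim
  let b : Fin k → K := fun i => B i
  have hb : span F (range b) = 𝒰 := (span_range_eq_top_iff 𝒰 B).mp B.span_eq
  have hbE : LinearIndependent E b :=
    (linearIndependent_iff_card_eq_finrank_span_span F).mpr (by rw [hb, hspan, Fintype.card_fin])
  have hk : k ≤ finrank E K := by simpa using hbE.fintype_card_le_finrank
  have hcount := Nat.card_eq_ncard_range_mul
    (fun v : {v : Fin k → K // LinearIndependent E v} => span F (range v.1))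
    (fun v => card_span_range_eq_span_range (F := F) v.2)
  rw [card_linearIndependent hk, ← linearAutOrbit_span_eq_range hbE, hb] at hcount
  change (linearAutOrbit E 𝒰).ncard * _ = _
  simp only [← Fin.prod_univ_eq_prod_range, card_eq_pow_finrank (K := E) (V := K)]
  exact hcount.symm
end

section
/- Let q be a prime power, s a divisor of n, and 𝒰 a k-dimensional F_q-subspace of F_{q^n} with 1 ∈ 𝒰 whose F_{q^s}-span has F_{q^s}-dimension r. Then the orbit of 𝒰 under the group of F_{q^s}-linear automorphisms of F_{q^n} has cardinality at least (1/[k choose r]_q) · ∏_{i=0}^{r-1}(q^n - q^{is}) / ∏_{i=0}^{r-1}(q^r - q^i). -/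
/-! Choose an `E`-basis `u` of `span_E 𝒰` inside `𝒰`. Every `E`-independent `r`-tuple `s` of `K`
is `φ ∘ u` for some `φ ∈ GL_E(K)`, so `s` is an `F`-independent tuple in the orbit point `φ(𝒰)`;
pulling it back to `𝒰` along a fixed representative of that orbit point injects the
`E`-independent `r`-tuples of `K` into (orbit) × (`F`-independent `r`-tuples of `𝒰`). Counting
both sides gives `∏ (q^n - q^{is}) ≤ |orbit| · ∏ (q^k - q^i)`, and
`∏ (q^k - q^i) = [k choose r]_q · ∏ (q^r - q^i)`. -/

open Finset Module Submodule

theorem LinearIndependent.exists_linearEquiv_apply_eq {K V ι : Type*} [DivisionRing K]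
    [AddCommGroup V] [Module K V] [Finite ι] {u x : ι → V}
    (hu : LinearIndependent K u) (hx : LinearIndependent K x) :
    ∃ g : V ≃ₗ[K] V, ∀ i, g (u i) = x i := by
  have : FiniteDimensional K (span K (Set.range u)) :=
    FiniteDimensional.span_of_finite K (Set.finite_range u)
  obtain ⟨g, hg⟩ := exists_linearEquiv_restrict_eq
    (hu.linearCombinationEquiv.symm ≪≫ₗ hx.linearCombinationEquiv)
  refine ⟨g, fun i => ?_⟩
  have hui : hu.linearCombinationEquiv (Finsupp.single i 1) = u i := by simp
  simpa [hui] using (hg (hu.linearCombinationEquiv (Finsupp.single i 1))).symm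

theorem exists_linearIndependent_fin_of_finrank_span {K V : Type*} [DivisionRing K]
    [AddCommGroup V] [Module K V] [FiniteDimensional K V] {t : Set V} {r : ℕ}
    (ht : finrank K (span K t) = r) :
    ∃ u : Fin r → V, LinearIndependent K u ∧ ∀ i, u i ∈ t := by
  obtain ⟨b, hbt, hspan, hb⟩ := exists_linearIndependent K t
  have := hb.setFinite.fintype
  have hcard : Fintype.card b = r := by
    rw [← ht, ← hspan, finrank_span_set_eq_card hb, Set.toFinset_card]
  let e := (Fintype.equivFinOfCardEq hcard).symm
  exact ⟨fun i => e i, hb.comp e e.injective, fun i => hbt (e i).2⟩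

theorem LinearIndependent.codRestrict_restrictScalars {F E K ι : Type*} [Field F] [Field E]
    [AddCommGroup K] [Module F K] [Module E K] [Algebra F E] [IsScalarTower F E K]
    {s : ι → K} (hs : LinearIndependent E s) {W : Submodule F K} (hW : ∀ i, s i ∈ W) :
    LinearIndependent F fun i => (⟨s i, hW i⟩ : W) :=
  (hs.restrict_scalars' F).of_comp W.subtype

theorem natCast_card_linearIndependent {K V : Type*} [DivisionRing K] [AddCommGroup V]
    [Module K V] [Fintype K] [Finite V] {r : ℕ} (hr : r ≤ finrank K V) :
    (Nat.card {s : Fin r → V // LinearIndependent K s} : ℚ) =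
      ∏ i ∈ range r, ((Fintype.card K : ℚ) ^ finrank K V - (Fintype.card K : ℚ) ^ i) := by
  rw [card_linearIndependent hr, Fin.prod_univ_eq_prod_range (fun i => _ - _ ^ i), Nat.cast_prod]
  refine prod_congr rfl fun i hi => ?_
  rw [Nat.cast_sub (Nat.pow_le_pow_right Fintype.card_pos (by grind))]
  push_cast
  rfl

theorem gaussBinom_mul_prod {q : ℚ} (hq : 1 < q) {k r : ℕ} (hrk : r ≤ k) :
    gaussBinom q k r * ∏ i ∈ range r, (q ^ r - q ^ i) = ∏ i ∈ range r, (q ^ k - q ^ i) := by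
  rw [gaussBinom, ← prod_mul_distrib]
  refine prod_congr rfl fun i hi => ?_
  have hi : i < r := mem_range.1 hi
  have hne : q ^ (r - i) - 1 ≠ 0 := sub_ne_zero.2 (one_lt_pow₀ hq (by omega)).ne'
  rw [show q ^ r - q ^ i = q ^ i * (q ^ (r - i) - 1) by rw [mul_sub, ← pow_add]; grind,
    show q ^ k - q ^ i = q ^ i * (q ^ (k - i) - 1) by rw [mul_sub, ← pow_add]; grind]
  field_simp

theorem card_linearIndependent_le_ncard_orbit_mul {F E K : Type*} [Field F] [Field E] [Field K]
    [Algebra F E] [Algebra E K] [Algebra F K] [IsScalarTower F E K] [Finite K]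
    {𝒰 : Submodule F K} {r : ℕ} {u : Fin r → K}
    (hu : LinearIndependent E u) (hu𝒰 : ∀ i, u i ∈ 𝒰) :
    Nat.card {s : Fin r → K // LinearIndependent E s} ≤
      Set.ncard {V : Submodule F K | ∃ φ : K ≃ₗ[E] K,
          V = 𝒰.map (φ.toLinearMap.restrictScalars F)} *
        Nat.card {x : Fin r → 𝒰 // LinearIndependent F x} := by
  set Ω := {V : Submodule F K | ∃ φ : K ≃ₗ[E] K, V = 𝒰.map (φ.toLinearMap.restrictScalars F)}
  choose φ hφ using fun s : {s : Fin r → K // LinearIndependent E s} =>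
    hu.exists_linearEquiv_apply_eq s.2
  choose ψ hψ using fun V : Ω => V.2
  let orbitPoint s : Ω := ⟨_, φ s, rfl⟩
  have hmem s i : (ψ (orbitPoint s)).symm (s.1 i) ∈ 𝒰 := by
    obtain ⟨y, hy, hys⟩ : s.1 i ∈ 𝒰.map ((ψ (orbitPoint s)).toLinearMap.restrictScalars F) := by
      rw [← hψ]
      exact mem_map.2 ⟨u i, hu𝒰 i, hφ s i⟩
    simpa [← hys] using hy
  let f s : Ω × {x : Fin r → 𝒰 // LinearIndependent F x} :=
    ⟨orbitPoint s, _, (s.2.map' _ (ψ (orbitPoint s)).symm.ker).codRestrict_restrictScalars (hmem s)⟩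
  have hf : Function.Injective f := by
    intro s t hst
    have hP : orbitPoint s = orbitPoint t := congrArg Prod.fst hst
    ext i
    have := congrArg (fun p => ((p.2.1 i : 𝒰) : K)) hst
    simp only [f, hP] at this
    exact (ψ (orbitPoint t)).symm.injective this
  rw [← Nat.card_coe_set_eq, ← Nat.card_prod]
  exact Nat.card_le_card_of_injective f hf

theorem stmt12_general (F E K : Type*) [Field F] [Field E] [Field K]
    [Algebra F E] [Algebra E K] [Algebra F K] [IsScalarTower F E K]
    [Fintype F] [Fintype E] [Fintype K]
    (k r : ℕ) (𝒰 : Submodule F K) (hdim : Module.finrank F ↥𝒰 = k)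
    (hspan : Module.finrank E ↥(Submodule.span E (𝒰 : Set K)) = r) :
    (∏ i ∈ Finset.range r, ((Fintype.card K : ℚ) - (Fintype.card E : ℚ) ^ i)) /
        (gaussBinom (Fintype.card F : ℚ) k r *
          ∏ i ∈ Finset.range r, ((Fintype.card F : ℚ) ^ r - (Fintype.card F : ℚ) ^ i))
      ≤ (Set.ncard {V : Submodule F K | ∃ φ : K ≃ₗ[E] K,
          V = 𝒰.map (φ.toLinearMap.restrictScalars F)} : ℚ) := by
  obtain ⟨u, hu, hu𝒰⟩ := exists_linearIndependent_fin_of_finrank_span hspan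
  have hrk : r ≤ k := by
    simpa [hdim] using (hu.codRestrict_restrictScalars hu𝒰).fintype_card_le_finrank
  have hrn : r ≤ finrank E K := hspan ▸ Submodule.finrank_le _
  rw [gaussBinom_mul_prod (by exact_mod_cast Fintype.one_lt_card) hrk, ← hdim,
    ← natCast_card_linearIndependent (hdim ▸ hrk), Module.card_eq_pow_finrank (K := E),
    Nat.cast_pow, ← natCast_card_linearIndependent hrn]
  exact div_le_of_le_mul₀ (Nat.cast_nonneg _) (Nat.cast_nonneg _)
    (by exact_mod_cast card_linearIndependent_le_ncard_orbit_mul hu hu𝒰)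

/-- Let `F ⊆ E ⊆ K` be finite fields and `𝒰` a `k`-dimensional `F`-subspace of `K` with
`1 ∈ 𝒰` whose `E`-span has `E`-dimension `r`. Then the orbit of `𝒰` under the `E`-linear
automorphisms of `K` has cardinality at least
`(1/[k choose r]_q) ∏_{i<r}(q^n - q^{is}) / ∏_{i<r}(q^r - q^i)`. -/
theorem stmt12 (F E K : Type*) [Field F] [Field E] [Field K]
    [Algebra F E] [Algebra E K] [Algebra F K] [IsScalarTower F E K]
    [Fintype F] [Fintype E] [Fintype K]
    (k r : ℕ) (𝒰 : Submodule F K) (hdim : Module.finrank F ↥𝒰 = k) (h1 : (1 : K) ∈ 𝒰)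
    (hspan : Module.finrank E ↥(Submodule.span E (𝒰 : Set K)) = r) :
    (∏ i ∈ Finset.range r, ((Fintype.card K : ℚ) - (Fintype.card E : ℚ) ^ i)) /
        (gaussBinom (Fintype.card F : ℚ) k r *
          ∏ i ∈ Finset.range r, ((Fintype.card F : ℚ) ^ r - (Fintype.card F : ℚ) ^ i))
      ≤ (Set.ncard {V : Submodule F K | ∃ φ : K ≃ₗ[E] K,
          V = 𝒰.map (φ.toLinearMap.restrictScalars F)} : ℚ) :=
  stmt12_general F E K k r 𝒰 hdim hspan
end

section
/- Let q be a prime power, n = 4a, s = 2a, and α ∈ F_{q^n} \ F_{q^s}. Then the four elements 1, α, α^{q^s}, α·α^{q^s} are linearly dependent over the subfield F_{q^a}; i.e., there exist λ, μ, ν ∈ F_{q^a}, not all zero, with λ + μα + μα^{q^s} + να·α^{q^s} = 0. -/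
open Polynomial

/-- Let `K = F_{q^{4a}}` with subfields `F_{q^a} ≤ F_{q^{2a}}` (encoded via cardinalities),
and `α ∈ K \ F_{q^{2a}}`. Then `1, α, α^{q^{2a}}, α·α^{q^{2a}}` are linearly dependent
over `F_{q^a}`, with the same coefficient on `α` and `α^{q^{2a}}`. -/
theorem stmt14 (K : Type*) [Field K] [Fintype K]
    (Fa Fs : Subfield K) (hle : Fa ≤ Fs)
    (hK : Nat.card K = Nat.card Fa ^ 4) (hFs : Nat.card Fs = Nat.card Fa ^ 2)
    (α : K) (hα : α ∉ Fs) :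
    ∃ l m v : K, l ∈ Fa ∧ m ∈ Fa ∧ v ∈ Fa ∧ ¬(l = 0 ∧ m = 0 ∧ v = 0) ∧
      l + m * α + m * α ^ Nat.card Fs + v * (α * α ^ Nat.card Fs) = 0 := by
  classical
  set q := Nat.card Fa with hq
  set M := Nat.card Fs with hM
  have hq2 : 2 ≤ q := by
    rw [hq, Nat.card_eq_fintype_card]
    exact Fintype.one_lt_card
  have hM2 : 2 ≤ M := by nlinarith
  -- characteristic
  obtain ⟨p, hp⟩ := CharP.exists K
  have hpf : CharP (↥Fa) p := (RingHom.charP_iff_charP Fa.subtype p).mpr hp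
  obtain ⟨j, hpprime, hcardFa⟩ := FiniteField.card (↥Fa) p
  haveI : Fact p.Prime := ⟨hpprime⟩
  have hqp : q = p ^ (j : ℕ) := by rw [hq, Nat.card_eq_fintype_card, hcardFa]
  have hMp : M = p ^ (2 * (j : ℕ)) := by rw [hFs, hqp, ← pow_mul, Nat.mul_comm]
  -- α ^ (M * M) = α
  have hcardK : Fintype.card K = M * M := by
    rw [← Nat.card_eq_fintype_card, hK, hFs]; ring
  have hMM : ∀ x : K, (x ^ M) ^ M = x := by
    intro x
    rw [← pow_mul, ← hcardK, FiniteField.pow_card]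
  -- fixed points of x ↦ x ^ M are exactly Fs
  have hfix : ∀ x : K, x ^ M = x → x ∈ Fs := by
    intro x hx
    set P : K[X] := X ^ M - X with hP
    have hdeg : P.natDegree = M := by
      rw [hP, Polynomial.natDegree_sub_eq_left_of_natDegree_lt] <;>
        simp [Polynomial.natDegree_X_pow] <;> omega
    have hP0 : P ≠ 0 := fun h => by simp [h] at hdeg; omega
    set R := P.roots.toFinset with hR
    have hRcard : R.card ≤ M := by
      calc R.card ≤ Multiset.card P.roots := Multiset.toFinset_card_le _
        _ ≤ P.natDegree := Polynomial.card_roots' P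
        _ = M := hdeg
    set T := Set.toFinset (Fs : Set K) with hT
    have hTcard : T.card = M := by
      rw [hT, Set.toFinset_card, hM, Nat.card_eq_fintype_card]
      rfl
    have hTR : T ⊆ R := by
      intro y hy
      rw [hT, Set.mem_toFinset] at hy
      have : (⟨y, hy⟩ : ↥Fs) ^ (Fintype.card ↥Fs) = ⟨y, hy⟩ := FiniteField.pow_card _
      have hy' : y ^ M = y := by
        have := congrArg (Subtype.val) this
        simpa [hM, Nat.card_eq_fintype_card] using this
      rw [hR, Multiset.mem_toFinset, Polynomial.mem_roots hP0]
      simp [hP, Polynomial.IsRoot, hy', sub_eq_zero]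
    have hTReq : T = R := Finset.eq_of_subset_of_card_le hTR (by omega)
    have hxR : x ∈ R := by
      rw [hR, Multiset.mem_toFinset, Polynomial.mem_roots hP0]
      simp [hP, Polynomial.IsRoot, hx, sub_eq_zero]
    rw [← hTReq, hT, Set.mem_toFinset] at hxR
    exact hxR
  -- the two symmetric elements lie in Fs
  have hu : α + α ^ M ∈ Fs := by
    apply hfix
    rw [hMp, add_pow_char_pow, ← hMp, hMM]
    ring
  have hv : α * α ^ M ∈ Fs := by
    apply hfix
    rw [mul_pow, hMM]
    ring
  -- pigeonhole
  set u : K := α + α ^ M with hudef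
  set w : K := α * α ^ M with hwdef
  set g : (↥Fa × ↥Fa × ↥Fa) → ↥Fs := fun t =>
    ⟨(t.1 : K) + (t.2.1 : K) * u + (t.2.2 : K) * w,
      Fs.add_mem (Fs.add_mem (hle t.1.2) (Fs.mul_mem (hle t.2.1.2) hu))
        (Fs.mul_mem (hle t.2.2.2) hv)⟩
  have hcards : Fintype.card ↥Fs < Fintype.card (↥Fa × ↥Fa × ↥Fa) := by
    rw [Fintype.card_prod, Fintype.card_prod, ← Nat.card_eq_fintype_card,
      ← Nat.card_eq_fintype_card, ← hq, ← hM, hFs]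
    nlinarith
  obtain ⟨a, b, hab, hgab⟩ := Fintype.exists_ne_map_eq_of_card_lt g hcards
  refine ⟨(a.1 : K) - b.1, (a.2.1 : K) - b.2.1, (a.2.2 : K) - b.2.2,
    Fa.sub_mem a.1.2 b.1.2, Fa.sub_mem a.2.1.2 b.2.1.2, Fa.sub_mem a.2.2.2 b.2.2.2, ?_, ?_⟩
  · rintro ⟨h1, h2, h3⟩
    apply hab
    rw [sub_eq_zero] at h1 h2 h3
    exact Prod.ext (Subtype.ext h1) (Prod.ext (Subtype.ext h2) (Subtype.ext h3))
  · have heq : (a.1 : K) + (a.2.1 : K) * u + (a.2.2 : K) * w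
        = (b.1 : K) + (b.2.1 : K) * u + (b.2.2 : K) * w := congrArg Subtype.val hgab
    simp only [hudef, hwdef] at heq ⊢
    linear_combination heq
end

section
/- Let q be a prime power, n = 4a, s = 2a, α ∈ F_{q^n} \ F_{q^s}, and 𝒰 = span_{F_{q^a}}{1, α} ⊆ F_{q^n}. Then 𝒰^{[s]} := {u^{q^s} : u ∈ 𝒰} lies in the Singer orbit of 𝒰, i.e., there exists γ ∈ F_{q^n}^* with γ𝒰 = 𝒰^{[s]}. -/
/-- Let `K = F_{q^{4a}}` with subfields `F_{q^a} ≤ F_{q^{2a}}` (encoded via cardinalities),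
`α ∈ K \ F_{q^{2a}}`, and `𝒰 = span_{F_{q^a}}{1, α}`. Then `𝒰^{[2a]} = {u^{q^{2a}} : u ∈ 𝒰}`
lies in the Singer orbit of `𝒰`: there is `γ ≠ 0` with `γ𝒰 = 𝒰^{[2a]}`. -/
theorem stmt15 (K : Type*) [Field K] [Fintype K]
    (Fa Fs : Subfield K) (hle : Fa ≤ Fs)
    (hK : Nat.card K = Nat.card Fa ^ 4) (hFs : Nat.card Fs = Nat.card Fa ^ 2)
    (α : K) (hα : α ∉ Fs) :
    ∃ γ : K, γ ≠ 0 ∧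
      (fun u : K => γ * u) '' ((Submodule.span (↥Fa) ({1, α} : Set K) : Submodule (↥Fa) K) : Set K) =
        (fun u : K => u ^ Nat.card Fs) ''
          ((Submodule.span (↥Fa) ({1, α} : Set K) : Submodule (↥Fa) K) : Set K) := by
  classical
  have instFa : Fintype ↥Fa := Fintype.ofFinite _
  have instFs : Fintype ↥Fs := Fintype.ofFinite _
  set q := Nat.card Fa with hq
  set Q := Nat.card Fs with hQdef
  have hqFin : Fintype.card ↥Fa = q := Nat.card_eq_fintype_card.symm
  have hQFin : Fintype.card ↥Fs = Q := Nat.card_eq_fintype_card.symm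
  have hq1 : 1 < q := by rw [← hqFin]; exact Fintype.one_lt_card
  have hQ1 : 1 < Q := by rw [hFs]; exact Nat.one_lt_pow two_ne_zero hq1
  -- characteristic
  set p := ringChar ↥Fs with hp
  haveI : CharP ↥Fs p := ringChar.charP ↥Fs
  haveI hchK : CharP K p :=
    charP_of_injective_ringHom (f := Fs.subtype) Subtype.coe_injective p
  obtain ⟨m, hpprime, hcardFs⟩ := FiniteField.card ↥Fs p
  haveI : Fact p.Prime := ⟨hpprime⟩
  have hQpm : Q = p ^ (m : ℕ) := by rw [← hQFin]; exact hcardFs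
  -- the Q-power map fixes Fs pointwise
  have hfix : ∀ x : K, x ∈ Fs → x ^ Q = x := by
    intro x hx
    have h1 : (⟨x, hx⟩ : ↥Fs) ^ Fintype.card ↥Fs = ⟨x, hx⟩ := FiniteField.pow_card _
    rw [hQFin] at h1
    have := congrArg (fun y : ↥Fs => (y : K)) h1
    simpa using this
  have hcardK : Fintype.card K = Q * Q := by
    rw [← Nat.card_eq_fintype_card, hK, hFs]; ring
  -- fixed points of the Q-power map lie in Fs
  have hfixed : ∀ x : K, x ^ Q = x → x ∈ Fs := by
    intro x hx
    set Sfin : Finset K := Finset.univ.filter (fun y => y ^ Q = y) with hS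
    have hsub : (Finset.univ.image (fun y : ↥Fs => (y : K))) ⊆ Sfin := by
      intro w hw
      simp only [Finset.mem_image] at hw
      obtain ⟨y, -, rfl⟩ := hw
      simp [hS, hfix y y.2]
    have hcard1 : (Finset.univ.image (fun y : ↥Fs => (y : K))).card = Q := by
      rw [Finset.card_image_of_injective _ Subtype.coe_injective, Finset.card_univ, hQFin]
    have hne : (Polynomial.X ^ Q - Polynomial.X : Polynomial K) ≠ 0 :=
      FiniteField.X_pow_card_sub_X_ne_zero K hQ1
    have hcard2 : Sfin.card ≤ Q := by
      have hsub2 : Sfin ⊆ (Polynomial.X ^ Q - Polynomial.X : Polynomial K).roots.toFinset := by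
        intro w hw
        simp only [hS, Finset.mem_filter] at hw
        rw [Multiset.mem_toFinset, Polynomial.mem_roots hne]
        simp [Polynomial.IsRoot, sub_eq_zero, hw.2]
      calc Sfin.card ≤ _ := Finset.card_le_card hsub2
        _ ≤ _ := Multiset.toFinset_card_le _
        _ ≤ _ := Polynomial.card_roots' _
        _ = Q := FiniteField.X_pow_card_sub_X_natDegree_eq K hQ1
    have heq := Finset.eq_of_subset_of_card_le hsub (by rw [hcard1]; exact hcard2)
    have hxS : x ∈ Sfin := by simp [hS, hx]
    rw [← heq] at hxS
    simp only [Finset.mem_image] at hxS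
    obtain ⟨y, -, rfl⟩ := hxS
    exact y.2
  have hφφ : ∀ u : K, (u ^ Q) ^ Q = u := by
    intro u
    rw [← pow_mul, ← hcardK]
    exact FiniteField.pow_card u
  set B := α ^ Q with hB
  have hBnot : B ∉ Fs := by
    intro h
    apply hα
    have h1 : B ^ Q = B := hfix B h
    rw [hφφ α] at h1
    rw [h1]; exact h
  have hα0 : α ≠ 0 := fun h => hα (h ▸ Fs.zero_mem)
  have hB0 : B ≠ 0 := fun h => hBnot (h ▸ Fs.zero_mem)
  set b := α + B with hbdef
  set N := α * B with hNdef
  have hbFs : b ∈ Fs := by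
    apply hfixed
    rw [hbdef, hQpm, add_pow_char_pow, ← hQpm, hφφ α, add_comm]
  have hNFs : N ∈ Fs := by
    apply hfixed
    rw [hNdef, mul_pow, hφφ α, mul_comm]
  -- existence of the key coefficients
  have key : ∃ x y : K, x ∈ Fa ∧ y ∈ Fa ∧ (x ≠ 0 ∨ y ≠ 0) ∧ x * b + y * N ∈ Fa := by
    by_cases hNa : N ∈ Fa
    · exact ⟨0, 1, Fa.zero_mem, Fa.one_mem, Or.inr one_ne_zero, by simpa using hNa⟩
    · set f : ↥Fa × ↥Fa → ↥Fs := fun uv =>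
        ⟨↑uv.1 + ↑uv.2 * N, add_mem (hle uv.1.2) (mul_mem (hle uv.2.2) hNFs)⟩ with hf
      have hinj : Function.Injective f := by
        rintro ⟨u1, v1⟩ ⟨u2, v2⟩ h
        have h' : (u1 : K) + v1 * N = u2 + v2 * N := congrArg Subtype.val h
        have hv : (v1 : K) = v2 := by
          by_contra hv
          apply hNa
          have hne : (v1 : K) - v2 ≠ 0 := sub_ne_zero.mpr hv
          have hN' : N = ((u2 : K) - u1) * ((v1 : K) - v2)⁻¹ := by
            rw [eq_mul_inv_iff_mul_eq₀ hne]
            linear_combination h'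
          rw [hN']
          exact mul_mem (sub_mem u2.2 u1.2) (inv_mem (sub_mem v1.2 v2.2))
        have hu : (u1 : K) = u2 := by
          have := h'
          rw [hv] at this
          exact add_right_cancel this
        simp only [Prod.mk.injEq]
        exact ⟨Subtype.ext hu, Subtype.ext hv⟩
      have hcards : Fintype.card (↥Fa × ↥Fa) = Fintype.card ↥Fs := by
        rw [Fintype.card_prod, hqFin, hQFin, hFs]; ring
      have hsurj : Function.Surjective f :=
        ((Fintype.bijective_iff_injective_and_card f).mpr ⟨hinj, hcards⟩).surjective
      obtain ⟨⟨u, v⟩, huv⟩ := hsurj ⟨b, hbFs⟩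
      have hco : (u : K) + v * N = b := congrArg Subtype.val huv
      refine ⟨1, -(v : K), Fa.one_mem, neg_mem v.2, Or.inl one_ne_zero, ?_⟩
      have : (1 : K) * b + (-(v : K)) * N = u := by linear_combination -hco
      rw [this]
      exact u.2
  obtain ⟨x, y, hxFa, hyFa, hxy0, hzFa⟩ := key
  set z := x * b + y * N with hzdef
  set γ := x + y * B with hγdef
  have hnz : ∀ β : K, β ∉ Fs → x + y * β ≠ 0 := by
    intro β hβ h
    rcases eq_or_ne y 0 with hy | hy
    · rw [hy, zero_mul, add_zero] at h
      rcases hxy0 with hx | hy'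
      · exact hx h
      · exact hy' hy
    · apply hβ
      have hβ' : β = (-x) * y⁻¹ := by
        rw [eq_mul_inv_iff_mul_eq₀ hy]
        linear_combination h
      rw [hβ']
      exact mul_mem (neg_mem (hle hxFa)) (inv_mem (hle hyFa))
  have hγ0 : γ ≠ 0 := hnz B hBnot
  have hγα : γ * α = z * 1 + (-x) * B := by
    rw [hγdef, hzdef, hbdef, hNdef]; ring
  have hd : ∀ dd : K, dd = x * x + y * z → dd = (x + y * α) * (x + y * B) := by
    intro dd h
    rw [h, hzdef, hbdef, hNdef]; ring
  set d := x * x + y * z with hddef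
  have hdfac : d = (x + y * α) * (x + y * B) := hd d rfl
  have hd0 : d ≠ 0 := by
    rw [hdfac]
    exact mul_ne_zero (hnz α hα) (hnz B hBnot)
  have hdFa : d ∈ Fa := add_mem (mul_mem hxFa hxFa) (mul_mem hyFa hzFa)
  -- linear maps
  set φlin : K →ₗ[↥Fa] K :=
    { toFun := fun u => u ^ Q
      map_add' := fun u v => by show (u + v) ^ Q = u ^ Q + v ^ Q; rw [hQpm]; exact add_pow_char_pow u v p m
      map_smul' := fun c u => by
        show ((c : K) * u) ^ Q = (c : K) * u ^ Q
        rw [mul_pow, hfix (c : K) (hle c.2)] } with hφlin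
  set γlin : K →ₗ[↥Fa] K :=
    { toFun := fun u => γ * u
      map_add' := fun u v => mul_add γ u v
      map_smul' := fun c u => by
        show γ * ((c : K) * u) = (c : K) * (γ * u)
        ring } with hγlin
  refine ⟨γ, hγ0, ?_⟩
  set U : Submodule ↥Fa K := Submodule.span ↥Fa ({1, α} : Set K) with hU
  have e1 : (fun u : K => γ * u) = ⇑γlin := rfl
  have e2 : (fun u : K => u ^ Q) = ⇑φlin := rfl
  have eγ1 : γlin 1 = γ := mul_one γ
  have eγ2 : γlin α = γ * α := rfl
  have eφ1 : φlin 1 = 1 := one_pow Q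
  have eφ2 : φlin α = B := rfl
  have mem2 : ∀ u v w1 w2 : K, u ∈ Fa → v ∈ Fa →
      u * w1 + v * w2 ∈ Submodule.span ↥Fa ({w1, w2} : Set K) := by
    intro u v w1 w2 hu hv
    exact Submodule.add_mem _
      (Submodule.smul_mem _ (⟨u, hu⟩ : ↥Fa) (Submodule.subset_span (Set.mem_insert _ _)))
      (Submodule.smul_mem _ (⟨v, hv⟩ : ↥Fa) (Submodule.subset_span (Set.mem_insert_of_mem _ rfl)))
  have hspan : Submodule.map γlin U = Submodule.map φlin U := by
    rw [hU, Submodule.map_span, Submodule.map_span, Set.image_pair, Set.image_pair,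
      eγ1, eγ2, eφ1, eφ2]
    apply le_antisymm
    · rw [Submodule.span_le, Set.insert_subset_iff, Set.singleton_subset_iff]
      constructor
      · have hh : γ = x * 1 + y * B := by rw [hγdef]; ring
        rw [hh]
        exact mem2 _ _ _ _ hxFa hyFa
      · rw [hγα]
        exact mem2 _ _ _ _ hzFa (neg_mem hxFa)
    · rw [Submodule.span_le, Set.insert_subset_iff, Set.singleton_subset_iff]
      constructor
      · have h1 : (d⁻¹ * x) * γ + (d⁻¹ * y) * (γ * α) = 1 := by
          rw [hγα]
          have expand : (d⁻¹ * x) * γ + (d⁻¹ * y) * (z * 1 + (-x) * B) = d⁻¹ * d := by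
            rw [hddef, hγdef]; ring
          rw [expand, inv_mul_cancel₀ hd0]
        rw [← h1]
        exact mem2 _ _ _ _ (mul_mem (inv_mem hdFa) hxFa) (mul_mem (inv_mem hdFa) hyFa)
      · have h2 : (d⁻¹ * z) * γ + (d⁻¹ * (-x)) * (γ * α) = B := by
          rw [hγα]
          have expand : (d⁻¹ * z) * γ + (d⁻¹ * (-x)) * (z * 1 + (-x) * B) = d⁻¹ * d * B := by
            rw [hddef, hγdef]; ring
          rw [expand, inv_mul_cancel₀ hd0, one_mul]
        rw [← h2]
        exact mem2 _ _ _ _ (mul_mem (inv_mem hdFa) hzFa) (mul_mem (inv_mem hdFa) (neg_mem hxFa))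
  rw [e1, e2, ← Submodule.map_coe, ← Submodule.map_coe, hspan]
end

section
/- Let q be a prime power, n = 4a, s = 2a, and α ∈ F_{q^n} \ F_{q^s}. Then α^{q^s}·span_{F_{q^a}}{1,α} ∩ span_{F_{q^a}}{1,α} ≠ {0}. -/
/-!
Put `m = |F_{q^s}|` and `β = α ^ m`. Since `[F_{q^n} : F_{q^s}] = 2`, `β ^ m = α`, so the trace
`T = α + β` and the norm `N = α β` of `α` lie in `F_{q^s}`. Now `β (c + d α) = (c T + d N) - c α`,
so it suffices to find `(c, d) ≠ 0` over `F_{q^a}` with `c T + d N ∈ F_{q^a}`. If `T ∉ F_{q^a}`,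
counting shows `F_{q^s} = F_{q^a} + F_{q^a} T`, so `N = e + f T` and `(c, d) = (-f, 1)` works.
Finally `c + d α ≠ 0` because `α ∉ F_{q^a}`.
-/

namespace Subfield

variable {K : Type*} [Field K]

open Polynomial in
theorem mem_iff_pow_natCard_eq_self (F : Subfield K) [Finite F] {x : K} :
    x ∈ F ↔ x ^ Nat.card F = x := by
  have := Fintype.ofFinite F
  have hroots := (splits_X_pow_nat_card_sub_X (K := F)).roots_map F.subtype
  have hP : (X ^ Nat.card F : K[X]) ≠ X := by
    rw [← sub_ne_zero, Nat.card_eq_fintype_card]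
    exact FiniteField.X_pow_card_sub_X_ne_zero K Fintype.one_lt_card
  rw [Nat.card_eq_fintype_card, FiniteField.roots_X_pow_card_sub_X] at hroots
  simpa [← Nat.card_eq_fintype_card, mem_roots', sub_eq_zero, hP, iff_comm] using
    congrArg (x ∈ ·) hroots

theorem eq_and_eq_of_add_mul_eq {F : Subfield K} {t a b a' b' : K} (ht : t ∉ F)
    (ha : a ∈ F) (hb : b ∈ F) (ha' : a' ∈ F) (hb' : b' ∈ F) (h : a + b * t = a' + b' * t) :
    a = a' ∧ b = b' := by
  have hb : b = b' := by
    by_contra hne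
    have : t = (a' - a) / (b - b') := by
      rw [eq_div_iff (sub_ne_zero.mpr hne)]
      linear_combination h
    exact ht (this ▸ F.div_mem (F.sub_mem ha' ha) (F.sub_mem hb hb'))
  subst hb
  exact ⟨add_right_cancel h, rfl⟩

theorem exists_eq_add_mul_of_natCard_eq_sq {F E : Subfield K} [Finite E] (hFE : F ≤ E)
    (hcard : Nat.card E = Nat.card F ^ 2) {t : K} (ht : t ∈ E) (htF : t ∉ F) {x : K}
    (hx : x ∈ E) : ∃ a ∈ F, ∃ b ∈ F, x = a + b * t := by
  let f : F × F → E := fun p =>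
    ⟨p.1 + p.2 * t, E.add_mem (hFE p.1.2) (E.mul_mem (hFE p.2.2) ht)⟩
  have hf : f.Injective := fun p p' h => by
    obtain ⟨h1, h2⟩ :=
      eq_and_eq_of_add_mul_eq htF p.1.2 p.2.2 p'.1.2 p'.2.2 (congrArg Subtype.val h)
    exact Prod.ext (Subtype.ext h1) (Subtype.ext h2)
  have hcard' : Nat.card E ≤ Nat.card (F × F) := by rw [Nat.card_prod, hcard, sq]
  obtain ⟨⟨a, b⟩, hab⟩ := (hf.bijective_of_nat_card_le hcard').2 ⟨x, hx⟩
  exact ⟨a, a.2, b, b.2, (congrArg Subtype.val hab).symm⟩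

theorem add_mul_mem_span_one_pair {F : Subfield K} {a b : K} (ha : a ∈ F) (hb : b ∈ F) (t : K) :
    a + b * t ∈ Submodule.span F ({1, t} : Set K) :=
  Submodule.mem_span_pair.2 ⟨⟨a, ha⟩, ⟨b, hb⟩, by simp [smul_def]⟩


section QuadraticExtension

variable [Fintype K] (F : Subfield K)

theorem pow_natCard_pow_natCard (hK : Nat.card K = Nat.card F ^ 2) (x : K) :
    (x ^ Nat.card F) ^ Nat.card F = x := by
  rw [← pow_mul, ← sq, ← hK, Nat.card_eq_fintype_card, FiniteField.pow_card]

theorem add_pow_natCard_mem (hK : Nat.card K = Nat.card F ^ 2) (x : K) :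
    x + x ^ Nat.card F ∈ F := by
  have := Fintype.ofFinite F
  have hσ := congrFun (FiniteField.coe_frobeniusAlgHom F K)
  rw [mem_iff_pow_natCard_eq_self, Nat.card_eq_fintype_card, ← hσ, map_add, hσ, hσ,
    ← Nat.card_eq_fintype_card, pow_natCard_pow_natCard F hK, add_comm]

theorem mul_pow_natCard_mem (hK : Nat.card K = Nat.card F ^ 2) (x : K) :
    x * x ^ Nat.card F ∈ F := by
  rw [mem_iff_pow_natCard_eq_self, mul_pow, pow_natCard_pow_natCard F hK, mul_comm]

end QuadraticExtension

theorem exists_mul_add_mul_mem {F E : Subfield K} [Finite E] (hFE : F ≤ E)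
    (hcard : Nat.card E = Nat.card F ^ 2) {t u : K} (ht : t ∈ E) (hu : u ∈ E) :
    ∃ c ∈ F, ∃ d ∈ F, (c ≠ 0 ∨ d ≠ 0) ∧ c * t + d * u ∈ F := by
  by_cases htF : t ∈ F
  · exact ⟨1, F.one_mem, 0, F.zero_mem, .inl one_ne_zero, by simpa using htF⟩
  obtain ⟨a, ha, b, hb, rfl⟩ := exists_eq_add_mul_of_natCard_eq_sq hFE hcard ht htF hu
  exact ⟨-b, F.neg_mem hb, 1, F.one_mem, .inr one_ne_zero, by simpa [add_comm] using ha⟩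

end Subfield

open Subfield in
/-- Let `K = F_{q^{4a}}` with subfields `F_{q^a} ≤ F_{q^{2a}}` (encoded via cardinalities)
and `α ∈ K \ F_{q^{2a}}`. Then `α^{q^{2a}}·span_{F_{q^a}}{1,α} ∩ span_{F_{q^a}}{1,α} ≠ {0}`. -/
theorem stmt16 (K : Type*) [Field K] [Fintype K]
    (Fa Fs : Subfield K) (hle : Fa ≤ Fs)
    (hK : Nat.card K = Nat.card Fa ^ 4) (hFs : Nat.card Fs = Nat.card Fa ^ 2)
    (α : K) (hα : α ∉ Fs) :
    ∃ x : K, x ≠ 0 ∧ x ∈ Submodule.span (↥Fa) ({1, α} : Set K) ∧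
      ∃ u ∈ Submodule.span (↥Fa) ({1, α} : Set K), x = α ^ Nat.card Fs * u := by
  set m := Nat.card Fs
  have hKm : Nat.card K = m ^ 2 := by rw [hK, hFs]; ring
  obtain ⟨c, hc, d, hd, hcd, hmem⟩ := exists_mul_add_mul_mem hle hFs
    (add_pow_natCard_mem Fs hKm α) (mul_pow_natCard_mem Fs hKm α)
  have hα0 : α ≠ 0 := fun h => hα (h ▸ Fs.zero_mem)
  have hne : c + d * α ≠ 0 := fun h => by
    have := eq_and_eq_of_add_mul_eq (fun h => hα (hle h)) hc hd Fa.zero_mem Fa.zero_mem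
      (by rw [h]; ring)
    tauto
  refine ⟨α ^ m * (c + d * α), mul_ne_zero (pow_ne_zero _ hα0) hne, ?_,
    c + d * α, add_mul_mem_span_one_pair hc hd α, rfl⟩
  have hdecomp : α ^ m * (c + d * α) = (c * (α + α ^ m) + d * (α * α ^ m)) + -c * α := by ring
  rw [hdecomp]
  exact add_mul_mem_span_one_pair hmem (Fa.neg_mem hc) α
end

section
/- Let q be a prime power, ω a primitive element of F_{q^n} with minimal polynomial f = X^n - Σ_{i=0}^{n-1} f_i X^i over F_q, and ⟨·,·⟩ the symmetric bilinear form with ⟨ω^i, ω^j⟩ = δ_{ij} for 0 ≤ i,j ≤ n-1. Let (a_i)_{i≥0} satisfy the linear recurrence a_{j+n} = Σ_{i=0}^{n-1} f_i a_{j+i} with (a_0,…,a_{n-1}) ≠ 0, and define the F_q-linear map ρ: F_{q^n} → F_{q^n} by ρ(ω^i) = Σ_{j=0}^{n-1} a_{j+i} ω^j for 0 ≤ i ≤ n-1. Then ρ is bijective and satisfies ⟨ρ(ωy), z⟩ = ⟨ρ(y), ωz⟩ for all y, z ∈ F_{q^n}; equivalently ρ∘m_ω = m_ω†∘ρ, where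 m_ω is multiplication by ω. -/
/-!
The map `ρ` is a Hankel operator: `⟨ρ(ω^m₁), ω^m₂⟩ = a_{m₁+m₂}` for all `m₁, m₂`, because both
sides are solutions of the recurrence with characteristic polynomial `f` in each variable and
agree for `m₁, m₂ < n`. Since every nonzero element of `F_{q^n}` is a power of `ω`, the adjoint
identity reduces to `a_{(m₁+1)+m₂} = a_{m₁+(m₂+1)}`. If `ρ(ω^k) = 0` then `a_{k+l} = 0` for all `l`,
and choosing `l` with `ω^{k+l} = ω^i` gives `a_i = 0`.
-/

namespace LinearRecurrence

variable {R : Type*} [CommSemiring R] (E : LinearRecurrence R)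

theorem IsSolution.comp_add_right {u : ℕ → R} (hu : E.IsSolution u) (k : ℕ) :
    E.IsSolution fun m ↦ u (m + k) := by
  intro m
  simp only [add_right_comm m _ k]
  exact hu (m + k)

theorem IsSolution.comp_add_left {u : ℕ → R} (hu : E.IsSolution u) (k : ℕ) :
    E.IsSolution fun m ↦ u (k + m) := by
  simpa only [add_comm k] using hu.comp_add_right E k

theorem isSolution_apply_pow {K : Type*} [Semiring K] [Algebra R K] {ω : K}
    (hω : ω ^ E.order = ∑ i, E.coeffs i • ω ^ (i : ℕ)) (φ : K →ₗ[R] R) :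
    E.IsSolution fun m ↦ φ (ω ^ m) := by
  intro m
  show φ (ω ^ (m + E.order)) = _
  rw [pow_add, hω, Finset.mul_sum, map_sum]
  simp only [mul_smul_comm, ← pow_add, map_smul, smul_eq_mul]

end LinearRecurrence

section Hankel

variable {F K : Type*} [CommSemiring F] [Semiring K] [Algebra F K]

theorem apply_apply_pow_pow_eq_of_isSolution (E : LinearRecurrence F) {ω : K}
    (hω : ω ^ E.order = ∑ i, E.coeffs i • ω ^ (i : ℕ)) {a : ℕ → F} (ha : E.IsSolution a)
    {B : K →ₗ[F] K →ₗ[F] F}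
    (hB : ∀ i j : Fin E.order, B (ω ^ (i : ℕ)) (ω ^ (j : ℕ)) = if i = j then 1 else 0)
    {ρ : K →ₗ[F] K}
    (hρ : ∀ i : Fin E.order, ρ (ω ^ (i : ℕ)) = ∑ j : Fin E.order, a (j + i) • ω ^ (j : ℕ))
    (m₁ m₂ : ℕ) : B (ρ (ω ^ m₁)) (ω ^ m₂) = a (m₂ + m₁) := by
  have init : ∀ i j : Fin E.order, B (ρ (ω ^ (i : ℕ))) (ω ^ (j : ℕ)) = a (j + i) := by
    intro i j
    simp [hρ, hB]
  have small : ∀ i : Fin E.order, ∀ m₂, B (ρ (ω ^ (i : ℕ))) (ω ^ m₂) = a (m₂ + i) := by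
    intro i
    refine congrFun ((E.eq_iff_eqOn_range_order _ _ (E.isSolution_apply_pow hω _)
      (ha.comp_add_right E i)).mpr fun j hj ↦ ?_)
    exact init i ⟨j, Finset.mem_range.mp hj⟩
  refine congrFun ((E.eq_iff_eqOn_range_order (fun m ↦ B (ρ (ω ^ m)) (ω ^ m₂)) _
    (E.isSolution_apply_pow hω ((B.flip (ω ^ m₂)).comp ρ)) (ha.comp_add_left E m₂)).mpr
    fun i hi ↦ ?_) m₁
  exact small ⟨i, Finset.mem_range.mp hi⟩ m₂

end Hankel

section PrimitiveElement

variable {F K : Type*} [CommSemiring F] [Field K] [Algebra F K] {ω : K}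
  (hprim : ∀ x : K, x ≠ 0 → ∃ m : ℕ, x = ω ^ m) {a : ℕ → F}
  {B : K →ₗ[F] K →ₗ[F] F} {ρ : K →ₗ[F] K}
  (hankel : ∀ m₁ m₂ : ℕ, B (ρ (ω ^ m₁)) (ω ^ m₂) = a (m₂ + m₁))
include hprim hankel

theorem apply_map_mul_eq_apply_mul_of_hankel (y z : K) :
    B (ρ (ω * y)) z = B (ρ y) (ω * z) := by
  rcases eq_or_ne y 0 with rfl | hy
  · simp
  rcases eq_or_ne z 0 with rfl | hz
  · simp
  obtain ⟨k, rfl⟩ := hprim y hy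
  obtain ⟨l, rfl⟩ := hprim z hz
  rw [← pow_succ', ← pow_succ', hankel, hankel, Nat.succ_add, Nat.add_succ]

theorem injective_of_hankel {i : ℕ} (hi : a i ≠ 0) (hωi : ω ^ i ≠ 0) :
    Function.Injective ρ := by
  rw [injective_iff_map_eq_zero]
  intro y hy
  by_contra hy0
  obtain ⟨k, rfl⟩ := hprim y hy0
  obtain ⟨l, hl⟩ := hprim (ω ^ i * (ω ^ k)⁻¹) (mul_ne_zero hωi (inv_ne_zero hy0))
  have hi_eq : ω ^ i = ω ^ (l + k) := by
    rw [pow_add, ← hl, inv_mul_cancel_right₀ hy0]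
  apply hi
  calc a i = B (ρ (ω ^ (l + k))) (ω ^ 0) := by rw [← hi_eq, hankel, zero_add]
    _ = B (ρ (ω ^ k)) (ω ^ l) := by rw [hankel, hankel, zero_add]
    _ = 0 := by rw [hy, map_zero, LinearMap.zero_apply]

end PrimitiveElement

theorem stmt19_general (F K : Type*) [Field F] [Field K] [Algebra F K] [Fintype K]
    (n : ℕ) (ω : K)
    (hprim : ∀ x : K, x ≠ 0 → ∃ m : ℕ, x = ω ^ m)
    (f : Fin n → F) (hf : ω ^ n = ∑ i : Fin n, f i • ω ^ (i : ℕ))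
    (a : ℕ → F) (hrec : ∀ j : ℕ, a (j + n) = ∑ i : Fin n, f i * a (j + (i : ℕ)))
    (hne : ∃ i : Fin n, a (i : ℕ) ≠ 0)
    (B : K →ₗ[F] K →ₗ[F] F)
    (hB : ∀ i j : Fin n, B (ω ^ (i : ℕ)) (ω ^ (j : ℕ)) = if i = j then 1 else 0)
    (ρ : K →ₗ[F] K)
    (hρ : ∀ i : Fin n, ρ (ω ^ (i : ℕ)) = ∑ j : Fin n, a ((j : ℕ) + (i : ℕ)) • ω ^ (j : ℕ)) :
    Function.Bijective ρ ∧ ∀ y z : K, B (ρ (ω * y)) z = B (ρ y) (ω * z) := by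
  have hankel := apply_apply_pow_pow_eq_of_isSolution ⟨n, f⟩ hf hrec hB hρ
  obtain ⟨i, hi⟩ := hne
  have hωi : ω ^ (i : ℕ) ≠ 0 := fun h ↦ by simpa [h] using hB i i
  exact ⟨Finite.injective_iff_bijective.mp (injective_of_hankel hprim hankel hi hωi),
    apply_map_mul_eq_apply_mul_of_hankel hprim hankel⟩

/-- Let `ω` be a primitive element of `K = F_{q^n}` with minimal polynomial
`f = X^n - Σ f_i X^i`, and `B` the bilinear form with `B(ω^i, ω^j) = δ_{ij}` for
`i,j < n`. If `(a_i)` satisfies `a_{j+n} = Σ_{i<n} f_i a_{j+i}` with nonzero initial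
data, and `ρ` is the `F_q`-linear map with `ρ(ω^i) = Σ_{j<n} a_{j+i} ω^j` for `i < n`,
then `ρ` is bijective and `⟨ρ(ωy), z⟩ = ⟨ρ(y), ωz⟩` for all `y, z`. -/
theorem stmt19 (F K : Type*) [Field F] [Field K] [Algebra F K] [Fintype F] [Fintype K]
    (n : ℕ) (hn : 0 < n) (ω : K)
    (hprim : ∀ x : K, x ≠ 0 → ∃ m : ℕ, x = ω ^ m)
    (b : Module.Basis (Fin n) F K) (hb : ∀ i : Fin n, b i = ω ^ (i : ℕ))
    (f : Fin n → F) (hf : ω ^ n = ∑ i : Fin n, f i • ω ^ (i : ℕ))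
    (a : ℕ → F) (hrec : ∀ j : ℕ, a (j + n) = ∑ i : Fin n, f i * a (j + (i : ℕ)))
    (hne : ∃ i : Fin n, a (i : ℕ) ≠ 0)
    (B : K →ₗ[F] K →ₗ[F] F)
    (hB : ∀ i j : Fin n, B (ω ^ (i : ℕ)) (ω ^ (j : ℕ)) = if i = j then 1 else 0)
    (ρ : K →ₗ[F] K)
    (hρ : ∀ i : Fin n, ρ (ω ^ (i : ℕ)) = ∑ j : Fin n, a ((j : ℕ) + (i : ℕ)) • ω ^ (j : ℕ)) :
    Function.Bijective ρ ∧ ∀ y z : K, B (ρ (ω * y)) z = B (ρ y) (ω * z) :=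
  stmt19_general F K n ω hprim f hf a hrec hne B hB ρ hρ
end
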